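/- arXiv:1804.07374 — 5 statements merged into one kernel-verified Lean document; each statement's English description precedes it below -/
import Mathlib

section
/- Main theorem: Let T be the union of tables T₁, ..., Tₘ (formally, let T = T₁ ∪ T₂ for two tables, each containing the empty prefix). For every string ω of length n, if p is the longest prefix match of ω in T, then for each i, the longest prefix match of ω in Tᵢ equals the longest prefix match of p in Tᵢ. -/
/-- `IsLPM T s p` : `p` is a longest prefix match for `s` in table `T`. -/
def IsLPM (T : Set (List Bool)) (s p : List Bool) : Prop :=
  p ∈ T ∧ p <+: s ∧ ∀ q ∈ T, q <+: s → q.length ≤ p.length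
lemma aux_lpm {S : Set (List Bool)} {ω p : List Bool}
    (hpω : p <+: ω)
    (hmax : ∀ q ∈ S, q <+: ω → q.length ≤ p.length) (q : List Bool) :
    IsLPM S ω q ↔ IsLPM S p q := by
  constructor
  · rintro ⟨hq, hqω, hb⟩
    have hqp : q <+: p := List.prefix_of_prefix_length_le hqω hpω (hmax q hq hqω)
    exact ⟨hq, hqp, fun r hr hrp => hb r hr (hrp.trans hpω)⟩
  · rintro ⟨hq, hqp, hb⟩
    refine ⟨hq, hqp.trans hpω, fun r hr hrω => ?_⟩
    exact hb r hr (List.prefix_of_prefix_length_le hrω hpω (hmax r hr hrω))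

theorem main_theorem (T₁ T₂ : Finset (List Bool))
    (h₁ : ([] : List Bool) ∈ T₁) (h₂ : ([] : List Bool) ∈ T₂)
    (n : ℕ) (ω : List Bool) (hω : ω.length = n) (p : List Bool)
    (hp : IsLPM (↑(T₁ ∪ T₂)) ω p) :
    (∀ q, IsLPM ↑T₁ ω q ↔ IsLPM ↑T₁ p q) ∧
    (∀ q, IsLPM ↑T₂ ω q ↔ IsLPM ↑T₂ p q) := by
  obtain ⟨hpT, hpω, hmax⟩ := hp
  have hm1 : ∀ q ∈ (↑T₁ : Set (List Bool)), q <+: ω → q.length ≤ p.length := by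
    intro q hq hqw
    exact hmax q (by simp at hq ⊢; exact Or.inl hq) hqw
  have hm2 : ∀ q ∈ (↑T₂ : Set (List Bool)), q <+: ω → q.length ≤ p.length := by
    intro q hq hqw
    exact hmax q (by simp at hq ⊢; exact Or.inr hq) hqw
  exact ⟨aux_lpm hpω hm1, aux_lpm hpω hm2⟩
end

section
/- Equivalence reformulation (soundness and completeness): Two tables T₁ and T₂, each containing the empty prefix, are forwarding equivalent on strings of length n (i.e., for every ω ∈ {0,1}ⁿ, nexthop_{T₁}(LPM_ω(T₁)) = nexthop_{T₂}(LPM_ω(T₂))) if and only if for every p that is the LPM in T = T₁ ∪ T₂ of some ω ∈ {0,1}ⁿ, we have nexthop_{T₁}(LPM_p(T₁)) = nexthop_{T₂}(LPM_p(T₂)). -/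
lemma exists_isLPM (T : Finset (List Bool)) (hT : ([] : List Bool) ∈ T)
    (s : List Bool) : ∃ p, IsLPM ↑T s p := by
  classical
  obtain ⟨p, hp, hmax⟩ := (T.filter (fun q => q <+: s)).exists_max_image
    List.length ⟨[], by simp [hT]⟩
  simp only [Finset.mem_filter] at hp hmax
  exact ⟨p, hp.1, hp.2, fun q hq hqs => hmax q ⟨hq, hqs⟩⟩

/-- transfer of LPM -/
lemma isLPM_trans {T₁ T₂ : Finset (List Bool)} {ω p q : List Bool}
    (hp : IsLPM (↑(T₁ ∪ T₂)) ω p) :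
    IsLPM ↑T₁ ω q ↔ IsLPM ↑T₁ p q := by
  obtain ⟨hpT, hpω, hpmax⟩ := hp
  constructor
  · rintro ⟨hq, hqω, hqmax⟩
    have hqp : q <+: p := List.prefix_of_prefix_length_le hqω hpω
      (hpmax q (by simp [Finset.mem_coe.mp hq]) hqω)
    exact ⟨hq, hqp, fun r hr hrp => hqmax r hr (hrp.trans hpω)⟩
  · rintro ⟨hq, hqp, hqmax⟩
    refine ⟨hq, hqp.trans hpω, fun r hr hrω => ?_⟩
    have hrp : r <+: p := List.prefix_of_prefix_length_le hrω hpω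
      (hpmax r (by simp [Finset.mem_coe.mp hr]) hrω)
    exact hqmax r hr hrp

theorem equivalence_reformulation (T₁ T₂ : Finset (List Bool))
    (h₁ : ([] : List Bool) ∈ T₁) (h₂ : ([] : List Bool) ∈ T₂)
    (nexthop₁ nexthop₂ : List Bool → ℕ) (n : ℕ)
    (hlen : ∀ p ∈ T₁ ∪ T₂, p.length ≤ n) :
    (∀ ω : List Bool, ω.length = n → ∀ q₁ q₂,
        IsLPM ↑T₁ ω q₁ → IsLPM ↑T₂ ω q₂ → nexthop₁ q₁ = nexthop₂ q₂) ↔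
    (∀ p ω : List Bool, ω.length = n → IsLPM (↑(T₁ ∪ T₂)) ω p →
        ∀ q₁ q₂, IsLPM ↑T₁ p q₁ → IsLPM ↑T₂ p q₂ →
          nexthop₁ q₁ = nexthop₂ q₂) := by
  have hT₁ : ∀ {T₁' T₂' : Finset (List Bool)} {ω p q : List Bool},
      IsLPM (↑(T₁' ∪ T₂')) ω p → (IsLPM ↑T₁' ω q ↔ IsLPM ↑T₁' p q) :=
    fun hp => isLPM_trans hp
  constructor
  · intro H p ω hω hp q₁ q₂ hq₁ hq₂
    have hp' : IsLPM (↑(T₂ ∪ T₁)) ω p := by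
      rwa [Finset.union_comm] at hp
    exact H ω hω q₁ q₂ ((hT₁ hp).mpr hq₁) ((hT₁ hp').mpr hq₂)
  · intro H ω hω q₁ q₂ hq₁ hq₂
    obtain ⟨p, hp⟩ := exists_isLPM (T₁ ∪ T₂)
      (Finset.mem_union_left _ h₁) ω
    have hp' : IsLPM (↑(T₂ ∪ T₁)) ω p := by
      rwa [Finset.union_comm] at hp
    exact H p ω hω hp q₁ q₂ ((hT₁ hp).mp hq₁) ((hT₁ hp').mp hq₂)
end

section
/- Completeness of prefix-based verification: if there exists a string ω of length n with nexthop_{T₁}(LPM_ω(T₁)) ≠ nexthop_{T₂}(LPM_ω(T₂)), then there exists a prefix p ∈ T₁ ∪ T₂ such that nexthop_{T₁}(LPM_p(T₁)) ≠ nexthop_{T₂}(LPM_p(T₂)). -/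
theorem verification_complete (T₁ T₂ : Finset (List Bool)) (n : ℕ)
    (h₁ : ([] : List Bool) ∈ T₁) (h₂ : ([] : List Bool) ∈ T₂)
    (hlen : ∀ p ∈ T₁ ∪ T₂, p.length ≤ n)
    (nexthop₁ nexthop₂ : List Bool → ℕ)
    (h : ∃ ω : List Bool, ω.length = n ∧ ∃ q₁ q₂,
        IsLPM ↑T₁ ω q₁ ∧ IsLPM ↑T₂ ω q₂ ∧ nexthop₁ q₁ ≠ nexthop₂ q₂) :
    ∃ p ∈ T₁ ∪ T₂, ∃ q₁ q₂,
      IsLPM ↑T₁ p q₁ ∧ IsLPM ↑T₂ p q₂ ∧ nexthop₁ q₁ ≠ nexthop₂ q₂ := by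
  obtain ⟨ω, -, q₁, q₂, ⟨hq₁T, hq₁p, hq₁max⟩, ⟨hq₂T, hq₂p, hq₂max⟩, hne⟩ := h
  set S : Finset (List Bool) := (T₁ ∪ T₂).filter (· <+: ω) with hS
  have hSne : S.Nonempty := ⟨[], by simp [hS, h₁]⟩
  obtain ⟨p, hpS, hpmax⟩ := S.exists_max_image List.length hSne
  simp only [hS, Finset.mem_filter] at hpS
  obtain ⟨hpT, hpω⟩ := hpS
  have key : ∀ q : List Bool, q <+: ω → q.length ≤ p.length → q <+: p := by
    intro q hq hlq
    rcases List.prefix_or_prefix_of_prefix hq hpω with h' | h'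
    · exact h'
    · exact (h'.eq_of_length_le hlq) ▸ List.prefix_refl q
  have hq₁p' : q₁ <+: p := key q₁ hq₁p (hpmax q₁ (by
    simp [hS, Finset.mem_filter, Finset.mem_union.2 (Or.inl hq₁T), hq₁p]))
  have hq₂p' : q₂ <+: p := key q₂ hq₂p (hpmax q₂ (by
    simp [hS, Finset.mem_filter, Finset.mem_union.2 (Or.inr hq₂T), hq₂p]))
  refine ⟨p, hpT, q₁, q₂, ⟨hq₁T, hq₁p', fun q hq hqp => hq₁max q hq (hqp.trans hpω)⟩,
    ⟨hq₂T, hq₂p', fun q hq hqp => hq₂max q hq (hqp.trans hpω)⟩, hne⟩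
end

section
/- Soundness of prefix-based verification: if for every p ∈ T₁ ∪ T₂ we have nexthop_{T₁}(LPM_p(T₁)) = nexthop_{T₂}(LPM_p(T₂)), then for every string ω of length n, nexthop_{T₁}(LPM_ω(T₁)) = nexthop_{T₂}(LPM_ω(T₂)). -/
theorem verification_sound (T₁ T₂ : Finset (List Bool)) (n : ℕ)
    (h₁ : ([] : List Bool) ∈ T₁) (h₂ : ([] : List Bool) ∈ T₂)
    (hlen : ∀ p ∈ T₁ ∪ T₂, p.length ≤ n)
    (nexthop₁ nexthop₂ : List Bool → ℕ)
    (h : ∀ p ∈ T₁ ∪ T₂, ∀ q₁ q₂,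
        IsLPM ↑T₁ p q₁ → IsLPM ↑T₂ p q₂ → nexthop₁ q₁ = nexthop₂ q₂) :
    ∀ ω : List Bool, ω.length = n → ∀ q₁ q₂,
      IsLPM ↑T₁ ω q₁ → IsLPM ↑T₂ ω q₂ → nexthop₁ q₁ = nexthop₂ q₂ := by
  rintro ω hω q₁ q₂ ⟨hq₁T, hq₁p, hq₁max⟩ ⟨hq₂T, hq₂p, hq₂max⟩
  set p : List Bool := if q₁.length ≤ q₂.length then q₂ else q₁ with hp
  have hpT : p ∈ T₁ ∪ T₂ := by
    have h1' : q₁ ∈ T₁ := hq₁T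
    have h2' : q₂ ∈ T₂ := hq₂T
    rw [hp]; split_ifs <;> simp [Finset.mem_union, h1', h2']
  have hpω : p <+: ω := by
    by_cases hc : q₁.length ≤ q₂.length <;> simp [hp, hc, hq₁p, hq₂p]
  have hq₁pp : q₁ <+: p := by
    by_cases hc : q₁.length ≤ q₂.length
    · simpa [hp, hc] using List.prefix_of_prefix_length_le hq₁p hq₂p hc
    · simp [hp, hc]
  have hq₂pp : q₂ <+: p := by
    by_cases hc : q₁.length ≤ q₂.length
    · simp [hp, hc]
    · simpa [hp, hc] using
        List.prefix_of_prefix_length_le hq₂p hq₁p (le_of_lt (not_le.mp hc))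
  exact h p hpT q₁ q₂
    ⟨hq₁T, hq₁pp, fun q hq hqp => hq₁max q hq (hqp.trans hpω)⟩
    ⟨hq₂T, hq₂pp, fun q hq hqp => hq₂max q hq (hqp.trans hpω)⟩
end

section
/- Generalization of the main theorem to m tables: let T = T₁ ∪ ... ∪ Tₘ (each Tᵢ containing the empty list), ω a string, and p = LPM_ω(T). Then for all i, LPM_ω(Tᵢ) = LPM_p(Tᵢ). -/
theorem main_theorem_m_tables (m : ℕ) (T : Fin m → Finset (List Bool))
    (hnil : ∀ i, ([] : List Bool) ∈ T i) (ω p : List Bool)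
    (hp : IsLPM (⋃ i, ↑(T i)) ω p) :
    ∀ (i : Fin m) (q : List Bool), IsLPM ↑(T i) ω q ↔ IsLPM ↑(T i) p q := by
  obtain ⟨hpT, hpω, hpmax⟩ := hp
  intro i q
  have key : ∀ r : List Bool, r ∈ T i → r <+: ω → r <+: p := by
    intro r hr hrω
    exact List.prefix_of_prefix_length_le hrω hpω
      (hpmax r (Set.mem_iUnion.mpr ⟨i, hr⟩) hrω)
  constructor
  · rintro ⟨hqT, hqω, hqmax⟩
    exact ⟨hqT, key q hqT hqω, fun r hr hrp => hqmax r hr (hrp.trans hpω)⟩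
  · rintro ⟨hqT, hqp, hqmax⟩
    exact ⟨hqT, hqp.trans hpω, fun r hr hrω => hqmax r hr (key r hr hrω)⟩
end
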